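/- The vector field F(Σ,A,K,v) defined by F₁ = -Σ(Σ - √3 r + 2) + Ωₜ(-3γ + (γ-2)v² + 2)/(2C₂((γ-1)v²+1)), F₂ = A(Σ + √3 r), F₃ = 2K(-Σ + √3 r - 1), F₄ = ((v²-1)/(γ(γ - v² - 1)))(γv(γΣ + 2γ - 2) + A((γ-1)(3γ-2) + (γ-2)v²)), where √3 r = Σ(2C₂Σ+1) + γΩₜv²/((γ-1)v²+1) + K and Ωₜ = ((γ-1)v²+1)(1 - C₂Σ² - C₂A² - K)/(γ + v² - 1), is equivariant under the map (Σ,A,K,v) ↦ (Σ,-A,K,-v): i.e., F₁ and F₃ are invariant while F₂ and F₄ change sign under this transformation. -/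

import Mathlib

noncomputable section

/-- Normalized fluid energy density Ωₜ determined by the constraint. -/
def Omt (γ C₂ S A K v : ℝ) : ℝ :=
  ((γ - 1) * v ^ 2 + 1) * (1 - C₂ * S ^ 2 - C₂ * A ^ 2 - K) / (γ + v ^ 2 - 1)

/-- √3 r, the Hubble-gradient-like parameter. -/
def sqrt3r (γ C₂ S A K v : ℝ) : ℝ :=
  S * (2 * C₂ * S + 1) + γ * Omt γ C₂ S A K v * v ^ 2 / ((γ - 1) * v ^ 2 + 1) + K

def F1 (γ C₂ S A K v : ℝ) : ℝ :=
  -S * (S - sqrt3r γ C₂ S A K v + 2) +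
    Omt γ C₂ S A K v * (-3 * γ + (γ - 2) * v ^ 2 + 2) / (2 * C₂ * ((γ - 1) * v ^ 2 + 1))

def F2 (γ C₂ S A K v : ℝ) : ℝ := A * (S + sqrt3r γ C₂ S A K v)

def F3 (γ C₂ S A K v : ℝ) : ℝ := 2 * K * (-S + sqrt3r γ C₂ S A K v - 1)

def F4 (γ C₂ S A K v : ℝ) : ℝ :=
  (v ^ 2 - 1) / (γ * (γ - v ^ 2 - 1)) *
    (γ * v * (γ * S + 2 * γ - 2) + A * ((γ - 1) * (3 * γ - 2) + (γ - 2) * v ^ 2))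

/-!
`A` and `v` enter `Ωₜ` and `√3 r` only through `A ^ 2` and `v ^ 2`, so both are invariant under
the reflection, and hence so are `F₁` and `F₃`. `F₂` is `A` times an invariant factor, and `F₄` is
an invariant prefactor times an expression that is linear in `(A, v)`, so both change sign.
-/

section Reflection

variable (γ C₂ S A K v : ℝ)

theorem Omt_neg_neg : Omt γ C₂ S (-A) K (-v) = Omt γ C₂ S A K v := by
  simp only [Omt, even_two, Even.neg_pow]

theorem sqrt3r_neg_neg : sqrt3r γ C₂ S (-A) K (-v) = sqrt3r γ C₂ S A K v := by
  simp only [sqrt3r, Omt_neg_neg, even_two, Even.neg_pow]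

theorem F1_neg_neg : F1 γ C₂ S (-A) K (-v) = F1 γ C₂ S A K v := by
  simp only [F1, Omt_neg_neg, sqrt3r_neg_neg, even_two, Even.neg_pow]

theorem F3_neg_neg : F3 γ C₂ S (-A) K (-v) = F3 γ C₂ S A K v := by
  rw [F3, F3, sqrt3r_neg_neg]

theorem F2_neg_neg : F2 γ C₂ S (-A) K (-v) = -F2 γ C₂ S A K v := by
  rw [F2, F2, sqrt3r_neg_neg, neg_mul]

theorem F4_neg_neg : F4 γ C₂ S (-A) K (-v) = -F4 γ C₂ S A K v := by
  simp only [F4, even_two, Even.neg_pow]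
  ring

end Reflection

theorem equivariance_of_reflection_general (γ C₂ S A K v : ℝ) :
    F1 γ C₂ S (-A) K (-v) = F1 γ C₂ S A K v ∧
    F3 γ C₂ S (-A) K (-v) = F3 γ C₂ S A K v ∧
    F2 γ C₂ S (-A) K (-v) = -F2 γ C₂ S A K v ∧
    F4 γ C₂ S (-A) K (-v) = -F4 γ C₂ S A K v :=
  ⟨F1_neg_neg .., F3_neg_neg .., F2_neg_neg .., F4_neg_neg ..⟩

/-- The θ-normalized perfect-fluid vector field is equivariant under
`(Σ, A, K, v) ↦ (Σ, -A, K, -v)`: the Σ- and K-components are invariant while the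
A- and v-components change sign. -/
theorem equivariance_of_reflection (γ C₂ S A K v : ℝ)
    (hγ : γ ≠ 0) (h1 : γ + v ^ 2 - 1 ≠ 0) (h2 : (γ - 1) * v ^ 2 + 1 ≠ 0) (hC : C₂ ≠ 0) :
    F1 γ C₂ S (-A) K (-v) = F1 γ C₂ S A K v ∧
    F3 γ C₂ S (-A) K (-v) = F3 γ C₂ S A K v ∧
    F2 γ C₂ S (-A) K (-v) = -F2 γ C₂ S A K v ∧
    F4 γ C₂ S (-A) K (-v) = -F4 γ C₂ S A K v :=
  equivariance_of_reflection_general γ C₂ S A K v
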